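/- arXiv:1710.05986 — 3 statements merged into one kernel-verified Lean document; each statement's English description precedes it below -/
import Mathlib

section
/- Let f : 𝔻 → ℂ be holomorphic with f(e^{iθ}) := lim_{r→1⁻} f(re^{iθ}) existing with |f(e^{iθ})| = 1, and suppose the limit L := lim_{r→1⁻} (f(e^{iθ}) − f(re^{iθ})) / ((1−r) f(e^{iθ})) exists and is a nonnegative real number. Then lim_{r→1⁻} (1 − |f(re^{iθ})|^2) / (−ln r) = 2L. -/
open Filter Topology

/-!
Writing `f(re^{iθ}) = b (1 - (1 - r) w(r))` with `w(r) → L` and `|b| = 1`, one gets exactly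
`1 - |f(re^{iθ})|² = (1 - r) (2 Re w(r) - (1 - r) |w(r)|²)`, so `(1 - |f|²)/(1 - r) → 2L`;
and `1 - r ~ -ln r` as `r → 1`.
-/

theorem Complex.one_sub_norm_sq_eq_mul {b : ℂ} (hb : ‖b‖ = 1) (z : ℂ) {t : ℝ} (ht : t ≠ 0) :
    1 - ‖z‖ ^ 2 =
      t * (2 * ((b - z) / (t * b)).re - t * Complex.normSq ((b - z) / (t * b))) := by
  set w := (b - z) / (t * b)
  have hb0 : b ≠ 0 := norm_ne_zero_iff.mp (by rw [hb]; exact one_ne_zero)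
  have hz : z = b * (1 - t * w) := by
    have ht' : (t : ℂ) ≠ 0 := Complex.ofReal_ne_zero.mpr ht
    simp only [w]
    field_simp
    ring
  have hnb : Complex.normSq b = 1 := by rw [← Complex.sq_norm, hb, one_pow]
  rw [Complex.sq_norm, hz, Complex.normSq_mul, hnb, one_mul]
  simp only [Complex.normSq_apply, Complex.sub_re, Complex.sub_im, Complex.one_re,
    Complex.one_im, Complex.mul_re, Complex.mul_im, Complex.ofReal_re, Complex.ofReal_im]
  ring

theorem Complex.tendsto_one_sub_norm_sq_div {α : Type*} {l : Filter α} {z : α → ℂ} {t : α → ℝ}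
    {b c : ℂ} (hb : ‖b‖ = 1) (ht : Tendsto t l (𝓝 0)) (ht0 : ∀ᶠ x in l, t x ≠ 0)
    (hc : Tendsto (fun x => (b - z x) / (t x * b)) l (𝓝 c)) :
    Tendsto (fun x => (1 - ‖z x‖ ^ 2) / t x) l (𝓝 (2 * c.re)) := by
  have hre := (Complex.continuous_re.tendsto c).comp hc
  have hnormSq := (Complex.continuous_normSq.tendsto c).comp hc
  have hlim := (hre.const_mul 2).sub (ht.mul hnormSq)
  rw [zero_mul, sub_zero] at hlim
  refine hlim.congr' ?_
  filter_upwards [ht0] with x hx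
  rw [Complex.one_sub_norm_sq_eq_mul hb (z x) hx, mul_div_cancel_left₀ _ hx]
  rfl

theorem Real.tendsto_one_sub_div_neg_log :
    Tendsto (fun r : ℝ => (1 - r) / -Real.log r) (𝓝[≠] 1) (𝓝 1) := by
  have hslope : Tendsto (slope Real.log 1) (𝓝[≠] 1) (𝓝 1) := by
    simpa using (Real.hasDerivAt_log one_ne_zero).tendsto_slope
  refine (inv_one (G := ℝ) ▸ hslope.inv₀ one_ne_zero).congr' (Eventually.of_forall fun r => ?_)
  rw [slope_def_field, Real.log_one, sub_zero, inv_div, ← neg_div_neg_eq, neg_sub]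

theorem stmt7_general (f : ℂ → ℂ)
    (θ : ℝ) (b : ℂ) (hb : ‖b‖ = 1)
    (L : ℝ)
    (hLlim : Filter.Tendsto
      (fun r : ℝ => (b - f ((r : ℂ) * Complex.exp (θ * Complex.I))) / (((1 : ℂ) - (r : ℂ)) * b))
      (nhdsWithin 1 (Set.Iio 1)) (nhds (L : ℂ))) :
    Filter.Tendsto
      (fun r : ℝ => (1 - ‖f ((r : ℂ) * Complex.exp (θ * Complex.I))‖ ^ 2) / (-Real.log r))
      (nhdsWithin 1 (Set.Iio 1)) (nhds (2 * L)) := by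
  have hleft : 𝓝[<] (1 : ℝ) ≤ 𝓝[≠] 1 := nhdsWithin_mono _ fun r hr => ne_of_lt hr
  have hsub : Tendsto (fun r : ℝ => 1 - r) (𝓝[<] 1) (𝓝 0) := by
    have h : Tendsto (fun r : ℝ => 1 - r) (𝓝 1) (𝓝 (1 - 1)) := tendsto_const_nhds.sub tendsto_id
    rw [sub_self] at h
    exact h.mono_left nhdsWithin_le_nhds
  have hsub0 : ∀ᶠ r : ℝ in 𝓝[<] 1, 1 - r ≠ 0 := by
    filter_upwards [self_mem_nhdsWithin] with r hr using sub_ne_zero.mpr (ne_of_gt hr)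
  have hquot := Complex.tendsto_one_sub_norm_sq_div hb hsub hsub0 (by simpa using hLlim)
  have hprod := (Real.tendsto_one_sub_div_neg_log.mono_left hleft).mul hquot
  rw [one_mul, Complex.ofReal_re] at hprod
  refine hprod.congr' ?_
  filter_upwards [hsub0] with r hr
  field_simp

/-- If f is holomorphic on the disc, has radial limit b of modulus 1 at e^{iθ},
and the angular-derivative-type limit L = lim (b − f(re^{iθ}))/((1−r)b) exists in
[0,∞), then (1 − |f(re^{iθ})|²)/(−ln r) → 2L as r → 1⁻. -/
theorem stmt7 (f : ℂ → ℂ) (hf : DifferentiableOn ℂ f (Metric.ball 0 1))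
    (θ : ℝ) (b : ℂ) (hb : ‖b‖ = 1)
    (hblim : Filter.Tendsto (fun r : ℝ => f ((r : ℂ) * Complex.exp (θ * Complex.I)))
      (nhdsWithin 1 (Set.Iio 1)) (nhds b))
    (L : ℝ) (hL : 0 ≤ L)
    (hLlim : Filter.Tendsto
      (fun r : ℝ => (b - f ((r : ℂ) * Complex.exp (θ * Complex.I))) / (((1 : ℂ) - (r : ℂ)) * b))
      (nhdsWithin 1 (Set.Iio 1)) (nhds (L : ℂ))) :
    Filter.Tendsto
      (fun r : ℝ => (1 - ‖f ((r : ℂ) * Complex.exp (θ * Complex.I))‖ ^ 2) / (-Real.log r))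
      (nhdsWithin 1 (Set.Iio 1)) (nhds (2 * L)) :=
  stmt7_general f θ b hb L hLlim
end

section
/- Under the hypotheses of the previous statement (radial limit f(e^{iθ}) of modulus 1 and angular-derivative limit L ∈ [0,∞)), one also has lim_{r→1⁻} ln|f(re^{iθ})| / ln r = L. -/
/-!
Put `w(r) = f(r e^{iθ}) / b`. The hypothesis says `(w(r) - 1) / (r - 1) → L`, so the chain rule
for the principal logarithm at `1` gives `log w(r) / (r - 1) → L`. Its real part is
`ln ‖f(r e^{iθ})‖ / (r - 1)` because `‖b‖ = 1`, and dividing by `ln r / (r - 1) → 1` finishes.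
-/

open Filter Topology Asymptotics

theorem HasDerivAt.tendsto_inv_smul_sub_of_tendsto_div {𝕜 F α : Type*} [NontriviallyNormedField 𝕜]
    [NormedAddCommGroup F] [NormedSpace 𝕜 F] {g : 𝕜 → F} {g' : F} {x : 𝕜}
    (hg : HasDerivAt g g' x) {l : Filter α} {u s : α → 𝕜} {c : 𝕜}
    (hu : Tendsto u l (𝓝 x)) (hs : ∀ᶠ a in l, s a ≠ 0)
    (hus : Tendsto (fun a => (u a - x) / s a) l (𝓝 c)) :
    Tendsto (fun a => (s a)⁻¹ • (g (u a) - g x)) l (𝓝 (c • g')) := by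
  have hO : (fun a => u a - x) =O[l] s :=
    isBigO_of_div_tendsto_nhds (hs.mono fun a ha h => absurd h ha) c hus
  have ho : (fun a => g (u a) - g x - (u a - x) • g') =o[l] s :=
    (hg.isLittleO.comp_tendsto hu).trans_isBigO hO
  have hlim := ho.tendsto_inv_smul_nhds_zero.add (hus.smul_const g')
  rw [zero_add] at hlim
  refine hlim.congr' (hs.mono fun a ha => ?_)
  rw [div_eq_inv_mul, mul_smul, ← smul_add, sub_add_cancel]

theorem Real.tendsto_log_div_sub_one : Tendsto (fun r => Real.log r / (r - 1)) (𝓝[≠] 1) (𝓝 1) := by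
  have h := (Real.hasDerivAt_log one_ne_zero).tendsto_slope
  rw [inv_one] at h
  refine h.congr fun r => ?_
  rw [slope_def_field, Real.log_one, sub_zero]

theorem tendsto_log_norm_div_sub_one_of_tendsto_sub_div {z : ℝ → ℂ} {b c : ℂ} (hb : ‖b‖ = 1)
    (hz : Tendsto z (𝓝[<] 1) (𝓝 b))
    (hc : Tendsto (fun r => (b - z r) / ((1 - r) * b)) (𝓝[<] 1) (𝓝 c)) :
    Tendsto (fun r => Real.log ‖z r‖ / (r - 1)) (𝓝[<] 1) (𝓝 c.re) := by
  have hb0 : b ≠ 0 := norm_ne_zero_iff.mp (hb ▸ one_ne_zero)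
  have hzb : Tendsto (fun r => z r / b) (𝓝[<] 1) (𝓝 1) := by
    simpa [div_self hb0] using hz.div_const b
  have hne : ∀ᶠ r : ℝ in 𝓝[<] 1, ((r : ℂ) - 1) ≠ 0 :=
    eventually_nhdsWithin_of_forall fun r hr => sub_ne_zero.mpr (by exact_mod_cast hr.ne)
  have hratio : Tendsto (fun r : ℝ => (z r / b - 1) / ((r : ℂ) - 1)) (𝓝[<] 1) (𝓝 c) := by
    refine hc.congr' (hne.mono fun r hr => ?_)
    have hr' : (1 : ℂ) - r ≠ 0 := by rwa [← neg_sub, neg_ne_zero]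
    field_simp
    ring
  have hlog :=
    (Complex.hasDerivAt_log Complex.one_mem_slitPlane).tendsto_inv_smul_sub_of_tendsto_div
      hzb hne hratio
  have hlog' : Tendsto (fun r : ℝ => Complex.log (z r / b) / ((r - 1 : ℝ) : ℂ)) (𝓝[<] 1) (𝓝 c) := by
    simpa [div_eq_inv_mul] using hlog
  refine ((Complex.continuous_re.tendsto _).comp hlog').congr fun r => ?_
  rw [Function.comp_apply, Complex.div_ofReal_re, Complex.log_re, norm_div, hb, div_one]

theorem stmt8_general (f : ℂ → ℂ)
    (θ : ℝ) (b : ℂ) (hb : ‖b‖ = 1)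
    (hblim : Filter.Tendsto (fun r : ℝ => f ((r : ℂ) * Complex.exp (θ * Complex.I)))
      (nhdsWithin 1 (Set.Iio 1)) (nhds b))
    (L : ℝ)
    (hLlim : Filter.Tendsto
      (fun r : ℝ => (b - f ((r : ℂ) * Complex.exp (θ * Complex.I))) / (((1 : ℂ) - (r : ℂ)) * b))
      (nhdsWithin 1 (Set.Iio 1)) (nhds (L : ℂ))) :
    Filter.Tendsto
      (fun r : ℝ => Real.log ‖f ((r : ℂ) * Complex.exp (θ * Complex.I))‖ / Real.log r)
      (nhdsWithin 1 (Set.Iio 1)) (nhds L) := by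
  have hnum := tendsto_log_norm_div_sub_one_of_tendsto_sub_div hb hblim hLlim
  have hden :=
    Real.tendsto_log_div_sub_one.mono_left (nhdsWithin_mono _ fun r (hr : r < 1) => hr.ne)
  have h := hnum.div hden one_ne_zero
  rw [Complex.ofReal_re, div_one] at h
  refine h.congr' (eventually_nhdsWithin_of_forall fun r (hr : r < 1) => ?_)
  exact div_div_div_cancel_right₀ (sub_ne_zero.mpr hr.ne) _ _

/-- Under the same hypotheses as the previous statement (radial limit of modulus 1
and angular-derivative limit L ∈ [0,∞)), one has ln|f(re^{iθ})| / ln r → L. -/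
theorem stmt8 (f : ℂ → ℂ) (hf : DifferentiableOn ℂ f (Metric.ball 0 1))
    (θ : ℝ) (b : ℂ) (hb : ‖b‖ = 1)
    (hblim : Filter.Tendsto (fun r : ℝ => f ((r : ℂ) * Complex.exp (θ * Complex.I)))
      (nhdsWithin 1 (Set.Iio 1)) (nhds b))
    (L : ℝ) (hL : 0 ≤ L)
    (hLlim : Filter.Tendsto
      (fun r : ℝ => (b - f ((r : ℂ) * Complex.exp (θ * Complex.I))) / (((1 : ℂ) - (r : ℂ)) * b))
      (nhdsWithin 1 (Set.Iio 1)) (nhds (L : ℂ))) :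
    Filter.Tendsto
      (fun r : ℝ => Real.log ‖f ((r : ℂ) * Complex.exp (θ * Complex.I))‖ / Real.log r)
      (nhdsWithin 1 (Set.Iio 1)) (nhds L) :=
  stmt8_general f θ b hb hblim L hLlim
end

section
/- Let g : 𝔻 → ℂ be holomorphic and suppose that both exp(g) extends continuously to a boundary point ζ ∈ T and that |Im g| < π on a neighborhood U ∩ 𝔻 of ζ. Then g itself extends continuously to ζ. -/
open Filter Topology Set Metric Complex

/-!
Where `|Im g| < π` we have `log (exp g) = g`, so it suffices that `log ∘ exp ∘ g` converges.
This is continuity of `log` at `L`, unless `L` lies on the cut `(-∞, 0)`. There `Re (exp g) < 0`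
near `ζ`, so `Im g` has no zero, hence a constant sign on the convex set `ball ζ r ∩ 𝔻`;
then `exp g` approaches `L` from one side of the cut, along which `log` has a one-sided limit.
-/

theorem IsPreconnected.forall_pos_or_forall_neg {α : Type*} [TopologicalSpace α] {s : Set α}
    (hs : IsPreconnected s) {f : α → ℝ} (hf : ContinuousOn f s) (hf0 : ∀ x ∈ s, f x ≠ 0) :
    (∀ x ∈ s, 0 < f x) ∨ ∀ x ∈ s, f x < 0 := by
  by_contra! ⟨⟨a, ha, hfa⟩, b, hb, hfb⟩
  obtain ⟨c, hc, hfc⟩ := hs.intermediate_value ha hb hf ⟨hfa, hfb⟩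
  exact hf0 c hc hfc

theorem Convex.eventually_pos_or_eventually_neg {E : Type*} [NormedAddCommGroup E]
    [NormedSpace ℝ E] {s : Set E} (hs : Convex ℝ s) {f : E → ℝ} (hf : ContinuousOn f s) {x : E}
    (hf0 : ∀ᶠ y in 𝓝[s] x, f y ≠ 0) :
    (∀ᶠ y in 𝓝[s] x, 0 < f y) ∨ ∀ᶠ y in 𝓝[s] x, f y < 0 := by
  obtain ⟨r, hr, hball⟩ := nhdsWithin_basis_ball.mem_iff.mp hf0
  have hV : ball x r ∩ s ∈ 𝓝[s] x :=
    inter_mem (mem_nhdsWithin_of_mem_nhds (ball_mem_nhds x hr)) self_mem_nhdsWithin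
  exact (((convex_ball x r).inter hs).isPreconnected.forall_pos_or_forall_neg
    (hf.mono inter_subset_right) hball).imp
    (mem_of_superset hV) (mem_of_superset hV)

theorem Complex.exists_tendsto_log_of_tendsto_neg_real {α : Type*} {l : Filter α} {u : α → ℂ}
    {L : ℂ} (hre : L.re < 0) (him : L.im = 0) (hu : Tendsto u l (𝓝 L))
    (hside : (∀ᶠ x in l, 0 ≤ (u x).im) ∨ ∀ᶠ x in l, (u x).im < 0) :
    ∃ c, Tendsto (fun x => log (u x)) l (𝓝 c) := by
  rcases hside with hup | hdown
  · exact ⟨_, (tendsto_log_nhdsWithin_im_nonneg_of_re_neg_of_im_zero hre him).comp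
      (tendsto_nhdsWithin_iff.mpr ⟨hu, hup⟩)⟩
  · exact ⟨_, (tendsto_log_nhdsWithin_im_neg_of_re_neg_of_im_zero hre him).comp
      (tendsto_nhdsWithin_iff.mpr ⟨hu, hdown⟩)⟩

theorem stmt15_general (g : ℂ → ℂ) (hg : DifferentiableOn ℂ g (Metric.ball 0 1))
    (ζ : ℂ) (L : ℂ) (hL : L ≠ 0)
    (hext : Filter.Tendsto (fun z => Complex.exp (g z))
      (nhdsWithin ζ (Metric.ball 0 1)) (nhds L))
    (U : Set ℂ) (hU : IsOpen U) (hζU : ζ ∈ U)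
    (hIm : ∀ z ∈ U ∩ Metric.ball (0:ℂ) 1, |(g z).im| < Real.pi) :
    ∃ c : ℂ, Filter.Tendsto g (nhdsWithin ζ (Metric.ball 0 1)) (nhds c) := by
  have hImζ : ∀ᶠ z in 𝓝[ball 0 1] ζ, |(g z).im| < Real.pi := by
    filter_upwards [mem_nhdsWithin_of_mem_nhds (hU.mem_nhds hζU), self_mem_nhdsWithin]
      with z hzU hz using hIm z ⟨hzU, hz⟩
  have hlog : (fun z => log (exp (g z))) =ᶠ[𝓝[ball 0 1] ζ] g := hImζ.mono fun z hz =>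
    log_exp (abs_lt.mp hz).1 (abs_lt.mp hz).2.le
  suffices ∃ c, Tendsto (fun z => log (exp (g z))) (𝓝[ball 0 1] ζ) (𝓝 c) from
    this.imp fun c hc => hc.congr' hlog
  by_cases hslit : L ∈ slitPlane
  · exact ⟨log L, (continuousAt_clog hslit).tendsto.comp hext⟩
  obtain ⟨hre, him⟩ : L.re < 0 ∧ L.im = 0 := by
    rw [mem_slitPlane_iff, not_or, not_lt, not_not] at hslit
    exact ⟨hslit.1.lt_of_ne fun h => hL (ext h hslit.2), hslit.2⟩
  have hIm0 : ∀ᶠ z in 𝓝[ball 0 1] ζ, (g z).im ≠ 0 :=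
    (hext.eventually (isOpen_lt continuous_re continuous_const |>.mem_nhds hre)).mono
      fun z hz h0 => by
        simp only [exp_re, h0, Real.cos_zero, mul_one] at hz
        exact (Real.exp_pos _).not_gt hz
  refine exists_tendsto_log_of_tendsto_neg_real hre him hext ?_
  rcases (convex_ball (0 : ℂ) 1).eventually_pos_or_eventually_neg
    (continuous_im.comp_continuousOn hg.continuousOn) hIm0 with hpos | hneg
  · refine .inl (hpos.and hImζ |>.mono fun z hz => ?_)
    rw [exp_im]
    exact (mul_pos (Real.exp_pos _) (Real.sin_pos_of_pos_of_lt_pi hz.1 (abs_lt.mp hz.2).2)).le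
  · refine .inr (hneg.and hImζ |>.mono fun z hz => ?_)
    rw [exp_im]
    exact mul_neg_of_pos_of_neg (Real.exp_pos _)
      (Real.sin_neg_of_neg_of_neg_pi_lt hz.1 (abs_lt.mp hz.2).1)

/-- If g is holomorphic on the disc, exp(g) extends continuously to a boundary
point ζ (with nonzero limit), and |Im g| < π near ζ, then g itself extends
continuously to ζ. -/
theorem stmt15 (g : ℂ → ℂ) (hg : DifferentiableOn ℂ g (Metric.ball 0 1))
    (ζ : ℂ) (hζ : ‖ζ‖ = 1) (L : ℂ) (hL : L ≠ 0)
    (hext : Filter.Tendsto (fun z => Complex.exp (g z))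
      (nhdsWithin ζ (Metric.ball 0 1)) (nhds L))
    (U : Set ℂ) (hU : IsOpen U) (hζU : ζ ∈ U)
    (hIm : ∀ z ∈ U ∩ Metric.ball (0:ℂ) 1, |(g z).im| < Real.pi) :
    ∃ c : ℂ, Filter.Tendsto g (nhdsWithin ζ (Metric.ball 0 1)) (nhds c) :=
  stmt15_general g hg ζ L hL hext U hU hζU hIm
end
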